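/- arXiv:1502.07110 — 6 statements merged into one kernel-verified Lean document; each statement's English description precedes it below -/
import Mathlib

section
/- Let S ∈ ℝ^{m×(n-ℓ)} and fix c₀ ∈ ℝ^m_{>0}. Then the set U(c₀) = {c ∈ ℝ^m_{>0} : Sᵀ(ln c - ln c₀) = 0} contains at most one element in each positive stoichiometric compatibility class, i.e., if c*, c** ∈ U(c₀) and c* - c** lies in the column space of S, then c* = c**. -/
/-- The set `U(c₀) = {c > 0 : Sᵀ(ln c - ln c₀) = 0}` contains at most one element in
each positive stoichiometric compatibility class: if `c*` and `c**` both belong to it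
and `c* - c**` lies in the column space of `S`, then `c* = c**`. -/
theorem at_most_one_per_compatibility_class {m k : ℕ}
    (S : Matrix (Fin m) (Fin k) ℝ) (c₀ c₁ c₂ : Fin m → ℝ)
    (h₀ : ∀ i, 0 < c₀ i) (h₁ : ∀ i, 0 < c₁ i) (h₂ : ∀ i, 0 < c₂ i)
    (hU₁ : S.transpose.mulVec (fun i => Real.log (c₁ i) - Real.log (c₀ i)) = 0)
    (hU₂ : S.transpose.mulVec (fun i => Real.log (c₂ i) - Real.log (c₀ i)) = 0)
    (hcc : ∃ y : Fin k → ℝ, c₁ - c₂ = S.mulVec y) :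
    c₁ = c₂ := by
  obtain ⟨y, hy⟩ := hcc
  set v : Fin m → ℝ := fun i => Real.log (c₁ i) - Real.log (c₂ i) with hv
  have hveq : v = (fun i => Real.log (c₁ i) - Real.log (c₀ i)) -
      (fun i => Real.log (c₂ i) - Real.log (c₀ i)) := by
    funext i; simp only [hv, Pi.sub_apply]; ring
  have hSv : S.transpose.mulVec v = 0 := by
    rw [hveq, Matrix.mulVec_sub, hU₁, hU₂, sub_zero]
  have hdot : dotProduct (c₁ - c₂) v = 0 := by
    rw [hy, dotProduct_comm, Matrix.dotProduct_mulVec, ← Matrix.mulVec_transpose, hSv,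
      zero_dotProduct]
  have hterm : ∀ i : Fin m, 0 ≤ (c₁ i - c₂ i) * v i := by
    intro i
    rcases lt_trichotomy (c₁ i) (c₂ i) with h | h | h
    · have hlog : Real.log (c₁ i) < Real.log (c₂ i) :=
        Real.log_lt_log (h₁ i) h
      have : v i < 0 := by simp [hv]; linarith
      nlinarith
    · simp [hv, h]
    · have hlog : Real.log (c₂ i) < Real.log (c₁ i) :=
        Real.log_lt_log (h₂ i) h
      have : 0 < v i := by simp [hv]; linarith
      nlinarith
  have hzero : ∀ i ∈ Finset.univ, (c₁ i - c₂ i) * v i = 0 := by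
    rw [← Finset.sum_eq_zero_iff_of_nonneg (fun i _ => hterm i)]
    simpa [dotProduct, Pi.sub_apply] using hdot
  funext i
  have h := hzero i (Finset.mem_univ i)
  rcases lt_trichotomy (c₁ i) (c₂ i) with hlt | heq | hgt
  · have hlog : Real.log (c₁ i) < Real.log (c₂ i) := Real.log_lt_log (h₁ i) hlt
    have : v i < 0 := by simp [hv]; linarith
    nlinarith
  · exact heq
  · have hlog : Real.log (c₂ i) < Real.log (c₁ i) := Real.log_lt_log (h₂ i) hgt
    have : 0 < v i := by simp [hv]; linarith
    nlinarith
end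

section
/- Let H ∈ ℝ^{n×n} be a Metzler matrix with H·1 = -a for some nonnegative vector a (so all column sums of the principal structure are nonpositive), and let p ∈ ℝⁿ be ordered so that p₁ ≥ ⋯ ≥ p_m > 0 = p_{m+1} = ⋯ = p_{m+r} > p_{m+r+1} ≥ ⋯ ≥ p_n. Set g = Hp. Then for every 1 ≤ k ≤ m, Σ_{i=1}^{k} g_i ≤ 0, and for every m+r+1 ≤ ℓ ≤ n, Σ_{i=ℓ}^{n} g_i ≥ 0. -/
/-- Lemma A.1: for a (C-)Metzler matrix `H` with nonpositive column sums and
`H·1 = -a`, `a ≥ 0`, and an ordered vector `p` with `m` positive, `r` zero and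
`n - m - r` negative entries, the vector `g = Hp` satisfies
`Σ_{i<k} g_i ≤ 0` for every `k ≤ m` and `Σ_{i≥l} g_i ≥ 0` for every `l ≥ m + r`. -/
theorem partial_sums_of_Hp {n : ℕ} (H : Matrix (Fin n) (Fin n) ℝ)
    (a p g : Fin n → ℝ) (m r : ℕ) (hmr : m + r ≤ n)
    (hoff : ∀ i j, i ≠ j → 0 ≤ H i j)
    (hdiag : ∀ i, H i i < 0)
    (hcol : ∀ j, ∑ i, H i j ≤ 0)
    (hrow : H.mulVec (fun _ => (1 : ℝ)) = -a)
    (ha : ∀ i, 0 ≤ a i)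
    (hanti : Antitone p)
    (hppos : ∀ i : Fin n, (i : ℕ) < m → 0 < p i)
    (hpzero : ∀ i : Fin n, m ≤ (i : ℕ) → (i : ℕ) < m + r → p i = 0)
    (hpneg : ∀ i : Fin n, m + r ≤ (i : ℕ) → p i < 0)
    (hp : p ≠ 0)
    (hg : g = H.mulVec p) :
    (∀ k, 1 ≤ k → k ≤ m →
      ∑ i ∈ Finset.univ.filter (fun i : Fin n => (i : ℕ) < k), g i ≤ 0) ∧
    (∀ l, m + r ≤ l → l < n →
      ∑ i ∈ Finset.univ.filter (fun i : Fin n => l ≤ (i : ℕ)), g i ≥ 0) := by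
  subst hg
  have hrows : ∀ i, ∑ j, H i j = -a i := by
    intro i
    have := congrFun hrow i
    simpa [Matrix.mulVec, dotProduct] using this
  constructor
  · intro k hk1 hkm
    set S := Finset.univ.filter (fun i : Fin n => (i : ℕ) < k) with hS
    have hkn : k - 1 < n := by omega
    set q : Fin n := ⟨k - 1, hkn⟩ with hq
    have hpq : 0 < p q := hppos q (by simp [hq]; omega)
    have swap : ∑ i ∈ S, (H.mulVec p) i
        = ∑ j, (∑ i ∈ S, H i j) * p j := by
      simp only [Matrix.mulVec, dotProduct]
      rw [Finset.sum_comm]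
      simp [Finset.sum_mul]
    rw [swap]
    have key : ∀ j : Fin n, (∑ i ∈ S, H i j) * p j ≤ (∑ i ∈ S, H i j) * p q := by
      intro j
      rcases lt_or_ge (j : ℕ) k with hj | hj
      · have hc : (∑ i ∈ S, H i j) ≤ 0 := by
          have hsplit : ∑ i ∈ S, H i j + ∑ i ∈ Finset.univ.filter (fun i : Fin n => ¬ (i : ℕ) < k), H i j = ∑ i, H i j :=
            Finset.sum_filter_add_sum_filter_not _ _ _
          have h2 : 0 ≤ ∑ i ∈ Finset.univ.filter (fun i : Fin n => ¬ (i : ℕ) < k), H i j := by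
            apply Finset.sum_nonneg
            intro i hi
            simp only [Finset.mem_filter, Finset.mem_univ, true_and] at hi
            exact hoff i j (by intro h; subst h; omega)
          linarith [hcol j]
        have hpj : p q ≤ p j := hanti (by rw [Fin.le_def]; simp [hq]; omega)
        exact mul_le_mul_of_nonpos_left hpj hc
      · have hc : 0 ≤ ∑ i ∈ S, H i j := by
          apply Finset.sum_nonneg
          intro i hi
          simp only [hS, Finset.mem_filter, Finset.mem_univ, true_and] at hi
          exact hoff i j (by intro h; subst h; omega)
        have hpj : p j ≤ p q := hanti (by rw [Fin.le_def]; simp [hq]; omega)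
        exact mul_le_mul_of_nonneg_left hpj hc
    calc ∑ j, (∑ i ∈ S, H i j) * p j ≤ ∑ j, (∑ i ∈ S, H i j) * p q :=
          Finset.sum_le_sum fun j _ => key j
      _ = (∑ j, ∑ i ∈ S, H i j) * p q := (Finset.sum_mul _ _ _).symm
      _ ≤ 0 := by
          have h1 : ∑ j, ∑ i ∈ S, H i j = ∑ i ∈ S, (-a i) := by
            rw [Finset.sum_comm]
            exact Finset.sum_congr rfl fun i _ => hrows i
          have h2 : ∑ i ∈ S, (-a i) ≤ 0 :=
            Finset.sum_nonpos fun i _ => neg_nonpos.mpr (ha i)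
          rw [h1]
          exact mul_nonpos_of_nonpos_of_nonneg h2 hpq.le
  · intro l hl hln
    set S := Finset.univ.filter (fun i : Fin n => l ≤ (i : ℕ)) with hS
    set q : Fin n := ⟨l, hln⟩ with hq
    have hpq : p q < 0 := hpneg q (by simp [hq]; omega)
    have swap : ∑ i ∈ S, (H.mulVec p) i
        = ∑ j, (∑ i ∈ S, H i j) * p j := by
      simp only [Matrix.mulVec, dotProduct]
      rw [Finset.sum_comm]
      simp [Finset.sum_mul]
    rw [swap]
    have key : ∀ j : Fin n, (∑ i ∈ S, H i j) * p q ≤ (∑ i ∈ S, H i j) * p j := by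
      intro j
      rcases lt_or_ge (j : ℕ) l with hj | hj
      · have hc : 0 ≤ ∑ i ∈ S, H i j := by
          apply Finset.sum_nonneg
          intro i hi
          simp only [hS, Finset.mem_filter, Finset.mem_univ, true_and] at hi
          exact hoff i j (by intro h; subst h; omega)
        have hpj : p q ≤ p j := hanti (by rw [Fin.le_def]; simp [hq]; omega)
        exact mul_le_mul_of_nonneg_left hpj hc
      · have hc : (∑ i ∈ S, H i j) ≤ 0 := by
          have hsplit : ∑ i ∈ S, H i j + ∑ i ∈ Finset.univ.filter (fun i : Fin n => ¬ l ≤ (i : ℕ)), H i j = ∑ i, H i j :=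
            Finset.sum_filter_add_sum_filter_not _ _ _
          have h2 : 0 ≤ ∑ i ∈ Finset.univ.filter (fun i : Fin n => ¬ l ≤ (i : ℕ)), H i j := by
            apply Finset.sum_nonneg
            intro i hi
            simp only [Finset.mem_filter, Finset.mem_univ, true_and] at hi
            exact hoff i j (by intro h; subst h; omega)
          linarith [hcol j]
        have hpj : p j ≤ p q := hanti (by rw [Fin.le_def]; simp [hq]; omega)
        exact mul_le_mul_of_nonpos_left hpj hc
    calc (0:ℝ) ≤ (∑ j, ∑ i ∈ S, H i j) * p q := by
          have h1 : ∑ j, ∑ i ∈ S, H i j = ∑ i ∈ S, (-a i) := by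
            rw [Finset.sum_comm]
            exact Finset.sum_congr rfl fun i _ => hrows i
          have h2 : ∑ i ∈ S, (-a i) ≤ 0 :=
            Finset.sum_nonpos fun i _ => neg_nonpos.mpr (ha i)
          rw [h1]
          nlinarith
      _ = ∑ j, (∑ i ∈ S, H i j) * p q := Finset.sum_mul _ _ _
      _ ≤ ∑ j, (∑ i ∈ S, H i j) * p j := Finset.sum_le_sum fun j _ => key j
end

section
/- Under the hypotheses of the previous lemma with H additionally being C-Metzler (invertible, compartmental, off-diagonals nonnegative), the boundary sums are strict: Σ_{i=1}^{m} g_i < 0 and Σ_{i=m+r+1}^{n} g_i > 0, where g = Hp and p has exactly m positive, r zero, and n-m-r negative entries ordered decreasingly. -/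
lemma det_eq_zero_of_block {n : ℕ} (H : Matrix (Fin n) (Fin n) ℝ)
    (S : Finset (Fin n)) (hS : S.Nonempty)
    (hblock : ∀ i j, i ∉ S → j ∈ S → H i j = 0)
    (hcolsum : ∀ j ∈ S, ∑ i ∈ S, H i j = 0) :
    H.det = 0 := by
  set M : Matrix S S ℝ := fun i j => H i j with hM
  have hMdet : M.det = 0 := by
    rw [← Matrix.exists_vecMul_eq_zero_iff]
    refine ⟨fun _ => 1, ?_, ?_⟩
    · obtain ⟨x, hx⟩ := hS
      intro h
      have := congrFun h ⟨x, hx⟩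
      simp at this
    · funext j
      have h0 := hcolsum j j.2
      rw [← Finset.sum_coe_sort S (fun i => H i j)] at h0
      simpa [Matrix.vecMul, dotProduct, hM] using h0
  obtain ⟨c, hc, hMc⟩ := (Matrix.exists_mulVec_eq_zero_iff).2 hMdet
  set v : Fin n → ℝ := fun j => if h : j ∈ S then c ⟨j, h⟩ else 0 with hv
  have hvne : v ≠ 0 := by
    intro h
    apply hc
    funext j
    have := congrFun h (j : Fin n)
    simpa [hv, j.2] using this
  have hHv : H.mulVec v = 0 := by
    funext i
    have split : ∑ j, H i j * v j = ∑ j ∈ S, H i j * v j := by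
      rw [← Finset.sum_filter_add_sum_filter_not Finset.univ (· ∈ S) (fun j => H i j * v j)]
      have : ∑ j ∈ Finset.univ.filter (¬ · ∈ S), H i j * v j = 0 := by
        apply Finset.sum_eq_zero
        intro j hj
        simp only [Finset.mem_filter] at hj
        simp [hv, dif_neg hj.2]
      rw [this, add_zero]
      congr 1
      ext j; simp
    by_cases hi : i ∈ S
    · have := congrFun hMc ⟨i, hi⟩
      simp only [Matrix.mulVec, dotProduct, Pi.zero_apply] at this ⊢
      rw [split, ← Finset.sum_coe_sort S (fun j => H i j * v j)]
      calc ∑ j : S, H i (j : Fin n) * v j = ∑ j : S, M ⟨i, hi⟩ j * c j := by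
            apply Finset.sum_congr rfl
            intro j _
            simp [hv, dif_pos j.2, hM]
        _ = 0 := this
    · simp only [Matrix.mulVec, dotProduct, Pi.zero_apply]
      rw [split]
      apply Finset.sum_eq_zero
      intro j hj
      rw [hblock i j hi hj, zero_mul]
  exact (Matrix.exists_mulVec_eq_zero_iff).1 ⟨v, hvne, hHv⟩

/-- Strict boundary sums in Lemma A.1 when `H` is additionally C-Metzler
(in particular invertible): `Σ_{i=1}^{m} g_i < 0` and `Σ_{i=m+r+1}^{n} g_i > 0`
for `g = Hp`. -/
theorem strict_boundary_sums_of_Hp {n : ℕ} (H : Matrix (Fin n) (Fin n) ℝ)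
    (a p g : Fin n → ℝ) (m r : ℕ) (hm : 0 < m) (hmr : m + r < n)
    (hoff : ∀ i j, i ≠ j → 0 ≤ H i j)
    (hdiag : ∀ i, H i i < 0)
    (hcol : ∀ j, ∑ i, H i j ≤ 0)
    (hdet : H.det ≠ 0)
    (hrow : H.mulVec (fun _ => (1 : ℝ)) = -a)
    (ha : ∀ i, 0 ≤ a i)
    (hanti : Antitone p)
    (hppos : ∀ i : Fin n, (i : ℕ) < m → 0 < p i)
    (hpzero : ∀ i : Fin n, m ≤ (i : ℕ) → (i : ℕ) < m + r → p i = 0)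
    (hpneg : ∀ i : Fin n, m + r ≤ (i : ℕ) → p i < 0)
    (hp : p ≠ 0)
    (hg : g = H.mulVec p) :
    (∑ i ∈ Finset.univ.filter (fun i : Fin n => (i : ℕ) < m), g i < 0) ∧
    (0 < ∑ i ∈ Finset.univ.filter (fun i : Fin n => m + r ≤ (i : ℕ)), g i) := by
  subst hg
  have hn : 0 < n := lt_of_le_of_lt (Nat.zero_le _) hmr
  -- generic rewriting of block sums
  have key : ∀ F : Finset (Fin n),
      ∑ i ∈ F, (H.mulVec p) i = ∑ j, (∑ i ∈ F, H i j) * p j := by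
    intro F
    simp only [Matrix.mulVec, dotProduct]
    rw [Finset.sum_comm]
    exact Finset.sum_congr rfl fun j _ => (Finset.sum_mul _ _ _).symm
  -- column-sum split helper
  have split : ∀ (F : Finset (Fin n)) (j : Fin n),
      (∑ i ∈ F, H i j) + ∑ i ∈ Finset.univ.filter (¬ · ∈ F), H i j = ∑ i, H i j := by
    intro F j
    rw [← Finset.sum_filter_add_sum_filter_not Finset.univ (· ∈ F) (fun i => H i j)]
    congr 1
    apply Finset.sum_congr _ (fun _ _ => rfl)
    ext i; simp
  constructor
  · -- positive block
    set S := Finset.univ.filter (fun i : Fin n => (i : ℕ) < m) with hSdef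
    have hSmem : ∀ i : Fin n, i ∈ S ↔ (i : ℕ) < m := by
      intro i; simp [hSdef]
    have termle : ∀ j : Fin n, (∑ i ∈ S, H i j) * p j ≤ 0 := by
      intro j
      rcases lt_or_ge (j : ℕ) m with hj | hj
      · -- p j > 0, column sum over S ≤ 0
        have hcompl : 0 ≤ ∑ i ∈ Finset.univ.filter (¬ · ∈ S), H i j := by
          apply Finset.sum_nonneg
          intro i hi
          simp only [Finset.mem_filter, hSmem] at hi
          exact hoff i j (fun h => hi.2 (h ▸ hj))
        have := split S j
        have hS0 : ∑ i ∈ S, H i j ≤ 0 := by linarith [hcol j]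
        nlinarith [hppos j hj]
      · rcases lt_or_ge (j : ℕ) (m + r) with hj2 | hj2
        · rw [hpzero j hj hj2, mul_zero]
        · have hS0 : 0 ≤ ∑ i ∈ S, H i j := by
            apply Finset.sum_nonneg
            intro i hi
            rw [hSmem] at hi
            exact hoff i j (by intro h; subst h; omega)
          nlinarith [hpneg j hj2]
    have hle : ∑ i ∈ S, (H.mulVec p) i ≤ 0 := by
      rw [key]
      exact Finset.sum_nonpos fun j _ => termle j
    rcases lt_or_eq_of_le hle with h | h
    · exact h
    · exfalso
      apply hdet
      have hall : ∀ j ∈ (Finset.univ : Finset (Fin n)), (∑ i ∈ S, H i j) * p j = 0 := by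
        rw [← Finset.sum_eq_zero_iff_of_nonpos (fun j _ => termle j)]
        rw [← key]; exact h
      have hcolS : ∀ j ∈ S, ∑ i ∈ S, H i j = 0 := by
        intro j hj
        have := hall j (Finset.mem_univ j)
        have hpj := hppos j ((hSmem j).1 hj)
        exact by nlinarith [mul_eq_zero.1 this]
      apply det_eq_zero_of_block H S ⟨⟨0, hn⟩, (hSmem _).2 hm⟩ _ hcolS
      intro i j hi hj
      have hj' := (hSmem j).1 hj
      have hoffc : ∀ i' ∈ Finset.univ.filter (¬ · ∈ S), 0 ≤ H i' j := by
        intro i' hi'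
        simp only [Finset.mem_filter, hSmem] at hi'
        exact hoff i' j (fun h => hi'.2 (h ▸ hj'))
      have hsum0 : ∑ i' ∈ Finset.univ.filter (¬ · ∈ S), H i' j = 0 := by
        have := split S j
        have := hcolS j hj
        have hnn := Finset.sum_nonneg hoffc
        linarith [hcol j]
      exact (Finset.sum_eq_zero_iff_of_nonneg hoffc).1 hsum0 i
        (Finset.mem_filter.2 ⟨Finset.mem_univ i, hi⟩)
  · -- negative block
    set T := Finset.univ.filter (fun i : Fin n => m + r ≤ (i : ℕ)) with hTdef
    have hTmem : ∀ i : Fin n, i ∈ T ↔ m + r ≤ (i : ℕ) := by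
      intro i; simp [hTdef]
    have termge : ∀ j : Fin n, 0 ≤ (∑ i ∈ T, H i j) * p j := by
      intro j
      rcases le_or_gt (m + r) (j : ℕ) with hj | hj
      · -- p j < 0, column sum over T ≤ 0
        have hcompl : 0 ≤ ∑ i ∈ Finset.univ.filter (¬ · ∈ T), H i j := by
          apply Finset.sum_nonneg
          intro i hi
          simp only [Finset.mem_filter, hTmem] at hi
          exact hoff i j (fun h => hi.2 (h ▸ hj))
        have := split T j
        have hT0 : ∑ i ∈ T, H i j ≤ 0 := by linarith [hcol j]
        nlinarith [hpneg j hj]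
      · rcases lt_or_ge (j : ℕ) m with hj2 | hj2
        · have hT0 : 0 ≤ ∑ i ∈ T, H i j := by
            apply Finset.sum_nonneg
            intro i hi
            rw [hTmem] at hi
            exact hoff i j (by intro h; subst h; omega)
          nlinarith [hppos j hj2]
        · rw [hpzero j hj2 (by omega), mul_zero]
    have hge : 0 ≤ ∑ i ∈ T, (H.mulVec p) i := by
      rw [key]
      exact Finset.sum_nonneg fun j _ => termge j
    rcases lt_or_eq_of_le hge with h | h
    · exact h
    · exfalso
      apply hdet
      have hall : ∀ j ∈ (Finset.univ : Finset (Fin n)), (∑ i ∈ T, H i j) * p j = 0 := by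
        rw [← Finset.sum_eq_zero_iff_of_nonneg (fun j _ => termge j)]
        rw [← key]; exact h.symm
      have hcolT : ∀ j ∈ T, ∑ i ∈ T, H i j = 0 := by
        intro j hj
        have := hall j (Finset.mem_univ j)
        have hpj := hpneg j ((hTmem j).1 hj)
        exact by nlinarith [mul_eq_zero.1 this]
      apply det_eq_zero_of_block H T ⟨⟨m + r, hmr⟩, (hTmem _).2 (le_refl _)⟩ _ hcolT
      intro i j hi hj
      have hj' := (hTmem j).1 hj
      have hoffc : ∀ i' ∈ Finset.univ.filter (¬ · ∈ T), 0 ≤ H i' j := by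
        intro i' hi'
        simp only [Finset.mem_filter, hTmem] at hi'
        exact hoff i' j (fun h => hi'.2 (h ▸ hj'))
      have hsum0 : ∑ i' ∈ Finset.univ.filter (¬ · ∈ T), H i' j = 0 := by
        have := split T j
        have := hcolT j hj
        have hnn := Finset.sum_nonneg hoffc
        linarith [hcol j]
      exact (Finset.sum_eq_zero_iff_of_nonneg hoffc).1 hsum0 i (Finset.mem_filter.2 ⟨Finset.mem_univ i, hi⟩)
end

section
/- Let g = Hp with H and p as in Lemma A.1 (H Metzler with H·1 = -a, a ≥ 0, inverse-nonpositive; p sorted with m positive, r zero, n-m-r negative entries), and let Q₁(x) ≥ ⋯ ≥ Q_m(x) > 0 = Q_{m+1}(x) = ⋯ = Q_{m+r}(x) > Q_{m+r+1}(x) ≥ ⋯ ≥ Q_n(x) be real numbers for each x ∈ X. Then G(x) = Σ_{i=1}^{n} g_i Q_i(x) < 0 for every x ∈ X. -/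
open Finset

private lemma abel_forward (c q : ℕ → ℝ) (m : ℕ)
    (hq : ∀ i, i + 1 < m → q (i + 1) ≤ q i)
    (hS : ∀ k, k ≤ m → ∑ i ∈ range k, c i ≤ 0) :
    ∀ k, k ≤ m → ∑ i ∈ range k, c i * q i ≤ q (k - 1) * ∑ i ∈ range k, c i := by
  intro k
  induction k with
  | zero => simp
  | succ k ih =>
    intro hkm
    rcases Nat.eq_zero_or_pos k with rfl | hk
    · simp [mul_comm]
    · have h1 := ih (by omega)
      have hqk : q k ≤ q (k - 1) := by
        have := hq (k - 1) (by omega)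
        rwa [Nat.sub_add_cancel hk] at this
      have hSk := hS k (by omega)
      rw [sum_range_succ, sum_range_succ]
      have h2 : q (k-1) * ∑ i ∈ range k, c i ≤ q k * ∑ i ∈ range k, c i :=
        mul_le_mul_of_nonpos_right hqk hSk
      have hk1 : (k + 1 - 1) = k := rfl
      rw [hk1]
      nlinarith [h1, h2]

private lemma abel_backward (c q : ℕ → ℝ) (s n : ℕ)
    (hq : ∀ i, s ≤ i → i + 1 < n → q (i + 1) ≤ q i)
    (hT : ∀ ℓ, s ≤ ℓ → ℓ ≤ n → 0 ≤ ∑ i ∈ Ico ℓ n, c i) :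
    ∀ d ℓ, s ≤ ℓ → ℓ + d = n → ∑ i ∈ Ico ℓ n, c i * q i ≤ q ℓ * ∑ i ∈ Ico ℓ n, c i := by
  intro d
  induction d with
  | zero => intro ℓ _ h; rw [← h]; simp
  | succ d ih =>
    intro ℓ hs h
    have hℓn : ℓ < n := by omega
    rw [Finset.sum_eq_sum_Ico_succ_bot hℓn, Finset.sum_eq_sum_Ico_succ_bot hℓn]
    rcases Nat.eq_zero_or_pos d with rfl | hd
    · simp [show n = ℓ + 1 by omega, mul_comm]
    · have h1 := ih (ℓ + 1) (by omega) (by omega)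
      have hT1 := hT (ℓ + 1) (by omega) (by omega)
      have hqq : q (ℓ + 1) ≤ q ℓ := hq ℓ hs (by omega)
      have h2 : q (ℓ+1) * ∑ i ∈ Ico (ℓ+1) n, c i ≤ q ℓ * ∑ i ∈ Ico (ℓ+1) n, c i :=
        mul_le_mul_of_nonneg_right hqq hT1
      nlinarith [h1, h2]

private lemma key_bound (c q : ℕ → ℝ) (n m r : ℕ) (hmr : m + r < n)
    (hq0 : ∀ j, m ≤ j → j < m + r → q j = 0)
    (hqanti : ∀ i, i + 1 < n → q (i + 1) ≤ q i)
    (hqmr : q (m + r) ≤ 0)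
    (hS : ∀ k, k ≤ m → ∑ i ∈ range k, c i ≤ 0)
    (hT : ∀ ℓ, m + r ≤ ℓ → ℓ ≤ n → 0 ≤ ∑ i ∈ Ico ℓ n, c i) :
    ∑ j ∈ range n, c j * q j ≤ q (m - 1) * ∑ i ∈ range m, c i := by
  have hsplit : ∑ j ∈ range n, c j * q j
      = ∑ j ∈ range m, c j * q j + ∑ j ∈ Ico m (m+r), c j * q j
        + ∑ j ∈ Ico (m+r) n, c j * q j := by
    rw [← Finset.sum_range_add_sum_Ico _ (show m + r ≤ n by omega),
        ← Finset.sum_range_add_sum_Ico _ (show m ≤ m + r by omega)]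
  have hmid : ∑ j ∈ Ico m (m+r), c j * q j = 0 :=
    Finset.sum_eq_zero (fun j hj => by
      rw [hq0 j (mem_Ico.mp hj).1 (mem_Ico.mp hj).2, mul_zero])
  have hA := abel_forward c q m (fun i hi => hqanti i (by omega)) hS m le_rfl
  have hB := abel_backward c q (m+r) n (fun i _ h2 => hqanti i h2) hT (n - (m+r)) (m+r)
    le_rfl (by omega)
  have hBle : ∑ j ∈ Ico (m+r) n, c j * q j ≤ 0 :=
    le_trans hB (mul_nonpos_iff.mpr (Or.inr ⟨hqmr, hT (m+r) le_rfl (by omega)⟩))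
  linarith

/-- Lemma A.2: with `g = Hp` as in Lemma A.1 (`H` C-Metzler, `H·1 = -a`, `a ≥ 0`,
inverse nonpositive) and numbers `Q₁(x) ≥ ⋯ ≥ Q_m(x) > 0 = ⋯ = 0 > Q_{m+r+1}(x)
≥ ⋯ ≥ Q_n(x)` for each `x ∈ X`, the function `G(x) = Σ g_i Q_i(x)` is strictly
negative on `X`. -/
theorem G_strictly_negative {n : ℕ} (H : Matrix (Fin n) (Fin n) ℝ)
    (a p g : Fin n → ℝ) (m r : ℕ) (hm : 0 < m) (hmr : m + r < n)
    (hoff : ∀ i j, i ≠ j → 0 ≤ H i j)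
    (hdiag : ∀ i, H i i < 0)
    (hcol : ∀ j, ∑ i, H i j ≤ 0)
    (hdet : H.det ≠ 0)
    (hinv : ∀ i j, H⁻¹ i j ≤ 0)
    (hrow : H.mulVec (fun _ => (1 : ℝ)) = -a)
    (ha : ∀ i, 0 ≤ a i)
    (hanti : Antitone p)
    (hppos : ∀ i : Fin n, (i : ℕ) < m → 0 < p i)
    (hpzero : ∀ i : Fin n, m ≤ (i : ℕ) → (i : ℕ) < m + r → p i = 0)
    (hpneg : ∀ i : Fin n, m + r ≤ (i : ℕ) → p i < 0)
    (hp : p ≠ 0)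
    (hg : g = H.mulVec p)
    (X : Set ℝ) (Q : ℝ → Fin n → ℝ)
    (hQanti : ∀ x ∈ X, Antitone (Q x))
    (hQpos : ∀ x ∈ X, ∀ i : Fin n, (i : ℕ) < m → 0 < Q x i)
    (hQzero : ∀ x ∈ X, ∀ i : Fin n, m ≤ (i : ℕ) → (i : ℕ) < m + r → Q x i = 0)
    (hQneg : ∀ x ∈ X, ∀ i : Fin n, m + r ≤ (i : ℕ) → Q x i < 0) :
    ∀ x ∈ X, ∑ i, g i * Q x i < 0 := by
  intro x hx
  have hmn : m ≤ n := by omega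
  -- ℕ-indexed versions of everything
  set H' : ℕ → ℕ → ℝ := fun i j => if h : i < n ∧ j < n then H ⟨i, h.1⟩ ⟨j, h.2⟩ else 0 with hH'def
  set p' : ℕ → ℝ := fun j => if h : j < n then p ⟨j, h⟩ else 0 with hp'def
  set q' : ℕ → ℝ := fun j => if h : j < n then Q x ⟨j, h⟩ else 0 with hq'def
  set g' : ℕ → ℝ := fun i => if h : i < n then g ⟨i, h⟩ else 0 with hg'def
  set a' : ℕ → ℝ := fun i => if h : i < n then a ⟨i, h⟩ else 0 with ha'def
  have hH'app : ∀ (i j : ℕ) (hi : i < n) (hj : j < n), H' i j = H ⟨i, hi⟩ ⟨j, hj⟩ := by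
    intro i j hi hj; simp [hH'def, hi, hj]
  have hp'app : ∀ (j : ℕ) (hj : j < n), p' j = p ⟨j, hj⟩ := by
    intro j hj; simp [hp'def, hj]
  have hq'app : ∀ (j : ℕ) (hj : j < n), q' j = Q x ⟨j, hj⟩ := by
    intro j hj; simp [hq'def, hj]
  have hg'app : ∀ (i : ℕ) (hi : i < n), g' i = g ⟨i, hi⟩ := by
    intro i hi; simp [hg'def, hi]
  have ha'app : ∀ (i : ℕ) (hi : i < n), a' i = a ⟨i, hi⟩ := by
    intro i hi; simp [ha'def, hi]
  have hH'fin : ∀ (i j : Fin n), H' (i : ℕ) (j : ℕ) = H i j := by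
    intro i j; rw [hH'app _ _ i.isLt j.isLt]
  -- basic entry facts
  have hoff' : ∀ i j, i < n → j < n → i ≠ j → 0 ≤ H' i j := by
    intro i j hi hj hij
    rw [hH'app _ _ hi hj]
    exact hoff _ _ (by simp [Fin.ext_iff]; omega)
  have ha'nn : ∀ i, 0 ≤ a' i := by
    intro i
    rcases Nat.lt_or_ge i n with hi | hi
    · rw [ha'app _ hi]; exact ha _
    · have : a' i = 0 := by simp [ha'def]; omega
      rw [this]
  -- row sums
  have hrow' : ∀ i, i < n → ∑ j ∈ range n, H' i j = -(a' i) := by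
    intro i hi
    have h1 : ∑ j : Fin n, H ⟨i, hi⟩ j = -a ⟨i, hi⟩ := by
      simpa [Matrix.mulVec, dotProduct] using congrFun hrow ⟨i, hi⟩
    calc ∑ j ∈ range n, H' i j = ∑ j : Fin n, H' i (j : ℕ) :=
          (Fin.sum_univ_eq_sum_range _ n).symm
      _ = ∑ j : Fin n, H ⟨i, hi⟩ j := by
          apply Finset.sum_congr rfl
          intro j _
          rw [hH'app _ _ hi j.isLt]
      _ = -(a' i) := by rw [h1, ha'app _ hi]
  -- column sums
  have hcol' : ∀ j, j < n → ∑ i ∈ range n, H' i j ≤ 0 := by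
    intro j hj
    have h1 : ∑ i : Fin n, H i ⟨j, hj⟩ ≤ 0 := hcol ⟨j, hj⟩
    calc ∑ i ∈ range n, H' i j = ∑ i : Fin n, H' (i : ℕ) j :=
          (Fin.sum_univ_eq_sum_range _ n).symm
      _ = ∑ i : Fin n, H i ⟨j, hj⟩ := by
          apply Finset.sum_congr rfl
          intro i _
          rw [hH'app _ _ i.isLt hj]
      _ ≤ 0 := h1
  -- rectangle sign lemmas
  have hRowTailNN : ∀ i t, i < t → t ≤ n → 0 ≤ ∑ j ∈ Ico t n, H' i j := by
    intro i t hit htn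
    apply Finset.sum_nonneg
    intro j hj
    have hj' := mem_Ico.mp hj
    exact hoff' i j (by omega) hj'.2 (by omega)
  have hRowInitNN : ∀ i t, t ≤ i → i < n → 0 ≤ ∑ j ∈ range t, H' i j := by
    intro i t hti hin
    apply Finset.sum_nonneg
    intro j hj
    have hj' := mem_range.mp hj
    exact hoff' i j hin (by omega) (by omega)
  have hColTailNN : ∀ j ℓ, j < ℓ → ℓ ≤ n → 0 ≤ ∑ i ∈ Ico ℓ n, H' i j := by
    intro j ℓ hjl hln
    apply Finset.sum_nonneg
    intro i hi
    have hi' := mem_Ico.mp hi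
    exact hoff' i j hi'.2 (by omega) (by omega)
  have hColInitNN : ∀ j ℓ, ℓ ≤ j → j < n → 0 ≤ ∑ i ∈ range ℓ, H' i j := by
    intro j ℓ hlj hjn
    apply Finset.sum_nonneg
    intro i hi
    have hi' := mem_range.mp hi
    exact hoff' i j (by omega) hjn (by omega)
  -- partial row/column sums are nonpositive
  have hRowPart : ∀ i t, i < t → t ≤ n → ∑ j ∈ range t, H' i j ≤ 0 := by
    intro i t hit htn
    have hsum : ∑ j ∈ range t, H' i j + ∑ j ∈ Ico t n, H' i j = ∑ j ∈ range n, H' i j :=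
      Finset.sum_range_add_sum_Ico _ htn
    rw [hrow' i (by omega)] at hsum
    linarith [hRowTailNN i t hit htn, ha'nn i]
  have hRowTail : ∀ i t, t ≤ i → i < n → ∑ j ∈ Ico t n, H' i j ≤ 0 := by
    intro i t hti hin
    have hsum : ∑ j ∈ range t, H' i j + ∑ j ∈ Ico t n, H' i j = ∑ j ∈ range n, H' i j :=
      Finset.sum_range_add_sum_Ico _ (by omega)
    rw [hrow' i hin] at hsum
    linarith [hRowInitNN i t hti hin, ha'nn i]
  have hColPart : ∀ j k, j < k → k ≤ n → ∑ i ∈ range k, H' i j ≤ 0 := by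
    intro j k hjk hkn
    have hsum : ∑ i ∈ range k, H' i j + ∑ i ∈ Ico k n, H' i j = ∑ i ∈ range n, H' i j :=
      Finset.sum_range_add_sum_Ico _ hkn
    linarith [hColTailNN j k hjk hkn, hcol' j (by omega)]
  have hColTail : ∀ j ℓ, ℓ ≤ j → j < n → ∑ i ∈ Ico ℓ n, H' i j ≤ 0 := by
    intro j ℓ hlj hjn
    have hsum : ∑ i ∈ range ℓ, H' i j + ∑ i ∈ Ico ℓ n, H' i j = ∑ i ∈ range n, H' i j :=
      Finset.sum_range_add_sum_Ico _ (by omega)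
    linarith [hColInitNN j ℓ hlj hjn, hcol' j hjn]
  -- block sums
  have hBlock : ∀ k t, k ≤ n → t ≤ n → ∑ j ∈ range t, ∑ i ∈ range k, H' i j ≤ 0 := by
    intro k t hkn htn
    rcases le_or_gt k t with h | h
    · rw [Finset.sum_comm]
      apply Finset.sum_nonpos
      intro i hi
      exact hRowPart i t (lt_of_lt_of_le (mem_range.mp hi) h) htn
    · apply Finset.sum_nonpos
      intro j hj
      exact hColPart j k (lt_trans (mem_range.mp hj) h) hkn
  have hCorner1 : ∀ k ℓ, k ≤ ℓ → 0 ≤ ∑ j ∈ Ico ℓ n, ∑ i ∈ range k, H' i j := by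
    intro k ℓ hkl
    apply Finset.sum_nonneg; intro j hj
    have hj' := mem_Ico.mp hj
    apply Finset.sum_nonneg; intro i hi
    have hi' := mem_range.mp hi
    exact hoff' i j (by omega) hj'.2 (by omega)
  have hCorner2 : ∀ ℓ t, t ≤ ℓ → 0 ≤ ∑ j ∈ range t, ∑ i ∈ Ico ℓ n, H' i j := by
    intro ℓ t htl
    apply Finset.sum_nonneg; intro j hj
    have hj' := mem_range.mp hj
    apply Finset.sum_nonneg; intro i hi
    have hi' := mem_Ico.mp hi
    exact hoff' i j hi'.2 (by omega) (by omega)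
  have hTail : ∀ ℓ t, ℓ ≤ n → t ≤ n → ∑ j ∈ Ico t n, ∑ i ∈ Ico ℓ n, H' i j ≤ 0 := by
    intro ℓ t hln htn
    rcases le_or_gt t ℓ with h | h
    · rw [Finset.sum_comm]
      apply Finset.sum_nonpos; intro i hi
      have hi' := mem_Ico.mp hi
      exact hRowTail i t (by omega) hi'.2
    · apply Finset.sum_nonpos; intro j hj
      have hj' := mem_Ico.mp hj
      exact hColTail j ℓ (by omega) hj'.2
  -- the strict corner bound, via the determinant
  have hStrict : ∑ j ∈ range m, ∑ i ∈ range m, H' i j < 0 := by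
    rcases lt_or_eq_of_le (hBlock m m hmn hmn) with h | h
    · exact h
    · exfalso
      have h' := h
      have hrows : ∀ i ∈ range m, ∑ j ∈ range m, H' i j = 0 := by
        rw [Finset.sum_comm] at h'
        exact (Finset.sum_eq_zero_iff_of_nonpos (fun i hi =>
          hRowPart i m (mem_range.mp hi) hmn)).mp h'
      have hcols : ∀ j ∈ range m, ∑ i ∈ range m, H' i j = 0 :=
        (Finset.sum_eq_zero_iff_of_nonpos (fun j hj =>
          hColPart j m (mem_range.mp hj) hmn)).mp h'
      have hcolzero : ∀ j, j < m → ∀ i ∈ Ico m n, H' i j = 0 := by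
        intro j hjm
        have hjn : j < n := by omega
        have hsum : ∑ i ∈ range m, H' i j + ∑ i ∈ Ico m n, H' i j = ∑ i ∈ range n, H' i j :=
          Finset.sum_range_add_sum_Ico _ hmn
        rw [hcols j (mem_range.mpr hjm)] at hsum
        have h2 : 0 ≤ ∑ i ∈ Ico m n, H' i j := hColTailNN j m hjm hmn
        have h4 : ∑ i ∈ Ico m n, H' i j = 0 := by linarith [hcol' j hjn]
        exact (Finset.sum_eq_zero_iff_of_nonneg (fun i hi =>
          hoff' i j (mem_Ico.mp hi).2 hjn
            (by have := (mem_Ico.mp hi).1; omega))).mp h4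
      set v : Fin n → ℝ := fun i => if (i : ℕ) < m then 1 else 0 with hv
      have hvne : v ≠ 0 := by
        intro hv0
        have := congrFun hv0 ⟨0, by omega⟩
        simp [hv, hm] at this
      have hmv : H.mulVec v = 0 := by
        funext i
        rw [Pi.zero_apply]
        have e1 : H.mulVec v i = ∑ j ∈ range n, H' (i:ℕ) j * (if j < m then 1 else 0) := by
          rw [← Fin.sum_univ_eq_sum_range (fun j => H' (i:ℕ) j * (if j < m then 1 else 0)) n]
          simp only [Matrix.mulVec, dotProduct, hv]
          apply Finset.sum_congr rfl
          intro j _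
          rw [hH'fin i j]
        rw [e1]
        have e2 : ∑ j ∈ range n, H' (i:ℕ) j * (if j < m then 1 else 0)
            = ∑ j ∈ range m, H' (i:ℕ) j := by
          rw [← Finset.sum_range_add_sum_Ico (fun j => H' (i:ℕ) j * (if j < m then 1 else 0)) hmn]
          have l1 : ∑ j ∈ range m, H' (i:ℕ) j * (if j < m then 1 else 0)
              = ∑ j ∈ range m, H' (i:ℕ) j :=
            Finset.sum_congr rfl (fun j hj => by rw [if_pos (mem_range.mp hj), mul_one])
          have l2 : ∑ j ∈ Ico m n, H' (i:ℕ) j * (if j < m then 1 else 0) = 0 :=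
            Finset.sum_eq_zero (fun j hj => by
              rw [if_neg (by have := (mem_Ico.mp hj).1; omega), mul_zero])
          rw [l1, l2, add_zero]
        rw [e2]
        rcases Nat.lt_or_ge (i:ℕ) m with him | him
        · exact hrows (i:ℕ) (mem_range.mpr him)
        · exact Finset.sum_eq_zero (fun j hj =>
            hcolzero j (mem_range.mp hj) (i:ℕ) (mem_Ico.mpr ⟨him, i.isLt⟩))
      exact hdet (Matrix.exists_mulVec_eq_zero_iff.mp ⟨v, hvne, hmv⟩)
  -- g' in terms of H' and p'
  have hg'' : ∀ i, i < n → g' i = ∑ j ∈ range n, H' i j * p' j := by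
    intro i hi
    rw [hg'app _ hi, hg]
    rw [← Fin.sum_univ_eq_sum_range (fun j => H' i j * p' j) n]
    simp only [Matrix.mulVec, dotProduct]
    apply Finset.sum_congr rfl
    intro j _
    rw [hH'app _ _ hi j.isLt, hp'app _ j.isLt]
  -- ordering facts for p' and q'
  have hp'anti : ∀ i, i + 1 < n → p' (i+1) ≤ p' i := by
    intro i hi
    rw [hp'app _ hi, hp'app _ (by omega : i < n)]
    exact hanti (by simp [Fin.le_def])
  have hp'zero : ∀ j, m ≤ j → j < m + r → p' j = 0 := by
    intro j h1 h2
    rw [hp'app _ (by omega)]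
    exact hpzero _ h1 h2
  have hp'mr : p' (m + r) ≤ 0 := by
    rw [hp'app _ hmr]
    exact le_of_lt (hpneg _ (by simp))
  have hp'm1 : 0 < p' (m - 1) := by
    rw [hp'app _ (by omega : m - 1 < n)]
    exact hppos _ (by simp; omega)
  have hq'anti : ∀ i, i + 1 < n → q' (i+1) ≤ q' i := by
    intro i hi
    rw [hq'app _ hi, hq'app _ (by omega : i < n)]
    exact hQanti x hx (by simp [Fin.le_def])
  have hq'zero : ∀ j, m ≤ j → j < m + r → q' j = 0 := by
    intro j h1 h2
    rw [hq'app _ (by omega)]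
    exact hQzero x hx _ h1 h2
  have hq'mr : q' (m + r) ≤ 0 := by
    rw [hq'app _ hmr]
    exact le_of_lt (hQneg x hx _ (by simp))
  have hq'm1 : 0 < q' (m - 1) := by
    rw [hq'app _ (by omega : m - 1 < n)]
    exact hQpos x hx _ (by simp; omega)
  -- rewriting partial sums of g'
  have hSwap : ∀ k, k ≤ n → ∑ i ∈ range k, g' i
      = ∑ j ∈ range n, (∑ i ∈ range k, H' i j) * p' j := by
    intro k hkn
    rw [Finset.sum_congr rfl (fun i hi => hg'' i (lt_of_lt_of_le (mem_range.mp hi) hkn)),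
        Finset.sum_comm]
    exact Finset.sum_congr rfl (fun j _ => (Finset.sum_mul _ _ _).symm)
  have hSwapT : ∀ ℓ, ℓ ≤ n → ∑ i ∈ Ico ℓ n, g' i
      = ∑ j ∈ range n, (∑ i ∈ Ico ℓ n, H' i j) * p' j := by
    intro ℓ hln
    rw [Finset.sum_congr rfl (fun i hi => hg'' i (mem_Ico.mp hi).2), Finset.sum_comm]
    exact Finset.sum_congr rfl (fun j _ => (Finset.sum_mul _ _ _).symm)
  -- partial sums of g are nonpositive
  have hS : ∀ k, k ≤ m → ∑ i ∈ range k, g' i ≤ 0 := by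
    intro k hkm
    rw [hSwap k (by omega)]
    have hkey := key_bound (fun j => ∑ i ∈ range k, H' i j) p' n m r hmr
      hp'zero hp'anti hp'mr
      (fun t htm => hBlock k t (by omega) (by omega))
      (fun ℓ hℓ1 hℓ2 => hCorner1 k ℓ (by omega))
    exact le_trans hkey
      (mul_nonpos_of_nonneg_of_nonpos (le_of_lt hp'm1) (hBlock k m (by omega) hmn))
  have hSm : ∑ i ∈ range m, g' i < 0 := by
    rw [hSwap m hmn]
    have hkey := key_bound (fun j => ∑ i ∈ range m, H' i j) p' n m r hmr
      hp'zero hp'anti hp'mr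
      (fun t htm => hBlock m t hmn (by omega))
      (fun ℓ hℓ1 hℓ2 => hCorner1 m ℓ (by omega))
    exact lt_of_le_of_lt hkey (mul_neg_of_pos_of_neg hp'm1 hStrict)
  -- tail sums of g are nonnegative
  have hT : ∀ ℓ, m + r ≤ ℓ → ℓ ≤ n → 0 ≤ ∑ i ∈ Ico ℓ n, g' i := by
    intro ℓ h1 h2
    have hkey := key_bound (fun j => -(∑ i ∈ Ico ℓ n, H' i j)) p' n m r hmr
      hp'zero hp'anti hp'mr
      (fun t htm => by
        simp only [Finset.sum_neg_distrib]
        exact neg_nonpos.mpr (hCorner2 ℓ t (by omega)))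
      (fun t ht1 ht2 => by
        simp only [Finset.sum_neg_distrib]
        exact neg_nonneg.mpr (hTail ℓ t h2 ht2))
    have e1 : ∑ j ∈ range n, (-(∑ i ∈ Ico ℓ n, H' i j)) * p' j
        = -∑ j ∈ range n, (∑ i ∈ Ico ℓ n, H' i j) * p' j := by
      simp [neg_mul]
    have e2 : ∑ i ∈ range m, (fun j => -(∑ i ∈ Ico ℓ n, H' i j)) i
        = -∑ j ∈ range m, ∑ i ∈ Ico ℓ n, H' i j := by
      simp
    rw [e1, e2] at hkey
    have h3 : 0 ≤ ∑ j ∈ range m, ∑ i ∈ Ico ℓ n, H' i j := hCorner2 ℓ m (by omega)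
    have h4 : p' (m-1) * -∑ j ∈ range m, ∑ i ∈ Ico ℓ n, H' i j ≤ 0 :=
      mul_nonpos_of_nonneg_of_nonpos (le_of_lt hp'm1) (neg_nonpos.mpr h3)
    rw [hSwapT ℓ h2]
    linarith
  -- conclusion
  have hGoal : ∑ i : Fin n, g i * Q x i = ∑ j ∈ range n, g' j * q' j := by
    rw [← Fin.sum_univ_eq_sum_range (fun j => g' j * q' j) n]
    apply Finset.sum_congr rfl
    intro j _
    rw [hg'app _ j.isLt, hq'app _ j.isLt]
  rw [hGoal]
  have hkey := key_bound g' q' n m r hmr hq'zero hq'anti hq'mr hS hT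
  exact lt_of_le_of_lt hkey (mul_neg_of_pos_of_neg hq'm1 hSm)
end

section
/- Let E ∈ ℝ^{(N-1)×(N-1)} be C-Metzler, a ∈ ℝ^{N-1}_{≥0}, f* = -E⁻¹a > 0 componentwise, g ∈ ℝ^{N-1}, and h = E⁻¹g. Define F(x) = gᵀ ln(f* + x h) on the open interval X = (L⁻, L⁺) where f* + x h > 0 componentwise. Then F is strictly decreasing on X; moreover F(x) → +∞ as x → (L⁻)⁺ and F(x) → -∞ as x → (L⁺)⁻. In particular, F has a unique zero in X. -/
/-!
Write `f(x) = fs + x h` and `u = h / f(x)`. Then `F'(x) = ∑ gᵢ uᵢ` is the quadratic form of the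
matrix `E diag(f(x))` at `u`; splitting it into row sums (`E f(x) = x g - a`), column sums and
edge terms `Eᵢⱼ fⱼ (uᵢ - uⱼ)²` gives `2 F' - x S = -Q` with `S = -F''` and `Q > 0` for `g ≠ 0`.
Hence `(x² F')' = -x Q`, so `x² F'` is negative away from `0` and `F` is strictly decreasing.

At a finite right endpoint `b` of `X` the coordinates of `f` vanishing at `b` contribute
`(∑_V gᵢ) log (b - x)` to `F` up to a bounded term, and at `+∞` the growing coordinates contribute
`(∑_P gᵢ) log x`. Because `E` is Metzler and nonsingular, `b ∑_V gᵢ > 0` and `∑_P gᵢ < 0`: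
equality would make `E` block triangular with a diagonal block on `V` (resp. `P`) that has a
positive right (resp. left) kernel vector. This gives the limits at the right end; the left end is
the right end for `(-g, -h)`, and the zero comes from the intermediate value theorem.
-/

open Filter Topology Matrix

theorem Matrix.det_eq_zero_of_mulVec_eq_zero_on_block {ι R : Type*} [Fintype ι] [DecidableEq ι]
    [CommRing R] [IsDomain R] {M : Matrix ι ι R} (p : ι → Prop) [DecidablePred p]
    (hM : ∀ i, p i → ∀ j, ¬p j → M i j = 0) {v : ι → R} (hv : ∃ i, p i ∧ v i ≠ 0)
    (hMv : ∀ i, p i → (M *ᵥ v) i = 0) : M.det = 0 := by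
  rw [M.twoBlockTriangular_det' p hM]
  suffices (M.toSquareBlockProp p).det = 0 by rw [this, zero_mul]
  obtain ⟨i₀, hi₀, hvi₀⟩ := hv
  refine Matrix.exists_mulVec_eq_zero_iff.1
    ⟨fun i => v i, fun h => hvi₀ (congrFun h ⟨i₀, hi₀⟩), funext fun i => ?_⟩
  have hout : ∑ j : {j // ¬p j}, M i j * v j = 0 :=
    Finset.sum_eq_zero fun j _ => by rw [hM i i.2 j j.2, zero_mul]
  have := hMv i i.2
  rw [Matrix.mulVec, dotProduct, ← Fintype.sum_subtype_add_sum_subtype p, hout, add_zero] at this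
  exact this

theorem IsOpen.csSup_notMem {α : Type*} [ConditionallyCompleteLinearOrder α] [TopologicalSpace α]
    [OrderTopology α] [DenselyOrdered α] [NoMaxOrder α] {s : Set α} (hs : IsOpen s)
    (hB : BddAbove s) : sSup s ∉ s := fun hmem => by
  obtain ⟨u, hu, hsub⟩ := exists_Ico_subset_of_mem_nhds (hs.mem_nhds hmem) (exists_gt _)
  obtain ⟨c, hc, hcu⟩ := exists_between hu
  exact (le_csSup hB (hsub ⟨hc.le, hcu⟩)).not_gt hc

theorem Set.OrdConnected.mem_nhdsLT_csSup {α : Type*} [ConditionallyCompleteLinearOrder α]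
    [TopologicalSpace α] [OrderTopology α] {s : Set α} (hs : s.OrdConnected) {x : α}
    (hx : x ∈ s) (hxs : x < sSup s) : s ∈ 𝓝[<] sSup s :=
  mem_of_superset (Ioo_mem_nhdsLT hxs) fun _ hy =>
    let ⟨_, hz, hyz⟩ := exists_lt_of_lt_csSup ⟨x, hx⟩ hy.2
    hs.out hx hz ⟨hy.1.le, hyz.le⟩

theorem Set.OrdConnected.mem_atTop {α : Type*} [LinearOrder α] {s : Set α} (hs : s.OrdConnected)
    {x : α} (hx : x ∈ s) (hB : ¬BddAbove s) : s ∈ atTop :=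
  mem_of_superset (Ici_mem_atTop x) fun y hy =>
    let ⟨_, hz, hyz⟩ := not_bddAbove_iff.1 hB y
    hs.out hx hz ⟨hy, hyz.le⟩

theorem existsUnique_eq_zero_of_injOn {X : Type*} [TopologicalSpace X] {s : Set X} {F : X → ℝ}
    (hs : IsPreconnected s) (hF : ContinuousOn F s) (hinj : s.InjOn F)
    (hpos : ∃ x ∈ s, 0 < F x) (hneg : ∃ x ∈ s, F x < 0) : ∃! x, x ∈ s ∧ F x = 0 := by
  obtain ⟨x₁, hx₁, h₁⟩ := hpos
  obtain ⟨x₂, hx₂, h₂⟩ := hneg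
  obtain ⟨x, hx, hx0⟩ := hs.intermediate_value hx₂ hx₁ hF ⟨h₂.le, h₁.le⟩
  exact ⟨x, ⟨hx, hx0⟩, fun y ⟨hy, hy0⟩ => hinj hy hx (hy0.trans hx0.symm)⟩

theorem neg_of_hasDerivAt_of_mul_neg {s : Set ℝ} (hs : s.OrdConnected) (h0 : 0 ∈ s)
    {G G' : ℝ → ℝ} (hG : ∀ t ∈ s, HasDerivAt G (G' t) t) (hG0 : G 0 = 0)
    (hsign : ∀ t ∈ s, t ≠ 0 → t * G' t < 0) {x : ℝ} (hx : x ∈ s) (hx0 : x ≠ 0) : G x < 0 := by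
  have hcont : ∀ t ∈ s, ContinuousWithinAt G s t := fun t ht =>
    (hG t ht).continuousAt.continuousWithinAt
  rcases hx0.lt_or_gt with hneg | hpos
  · have hIcc : Set.Icc x 0 ⊆ s := hs.out hx h0
    have hmono : StrictMonoOn G (Set.Icc x 0) :=
      strictMonoOn_of_deriv_pos (convex_Icc x 0) (fun t ht => (hcont t (hIcc ht)).mono hIcc)
        fun t ht => by
          rw [interior_Icc] at ht
          have hts := hIcc (Set.Ioo_subset_Icc_self ht)
          rw [(hG t hts).deriv]
          exact pos_of_mul_neg_right (hsign t hts ht.2.ne) ht.2.le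
    simpa [hG0] using hmono (Set.left_mem_Icc.2 hneg.le) (Set.right_mem_Icc.2 hneg.le) hneg
  · have hIcc : Set.Icc 0 x ⊆ s := hs.out h0 hx
    have hanti : StrictAntiOn G (Set.Icc 0 x) :=
      strictAntiOn_of_deriv_neg (convex_Icc 0 x) (fun t ht => (hcont t (hIcc ht)).mono hIcc)
        fun t ht => by
          rw [interior_Icc] at ht
          have hts := hIcc (Set.Ioo_subset_Icc_self ht)
          rw [(hG t hts).deriv]
          exact neg_of_mul_neg_right (hsign t hts ht.1.ne') ht.1.le
    simpa [hG0] using hanti (Set.left_mem_Icc.2 hpos.le) (Set.right_mem_Icc.2 hpos.le) hpos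

theorem tendsto_sum_mul_log_atBot {ι α : Type*} [Fintype ι] {l : Filter α} {c : ι → ℝ}
    {φ : ι → α → ℝ} {ρ : α → ℝ} (s : Finset ι) (hρ : ∀ᶠ x in l, ρ x ≠ 0)
    (hs : ∀ i ∈ s, ∃ k ≠ 0, Tendsto (fun x => φ i x / ρ x) l (𝓝 k))
    (hsc : ∀ i ∉ s, ∃ k ≠ 0, Tendsto (φ i) l (𝓝 k))
    (hlog : Tendsto (fun x => (∑ i ∈ s, c i) * Real.log (ρ x)) l atBot) :
    Tendsto (fun x => ∑ i, c i * Real.log (φ i x)) l atBot := by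
  classical
  set ψ : ι → α → ℝ := fun i x => if i ∈ s then φ i x / ρ x else φ i x
  have hψ : ∀ i, ∃ k ≠ 0, Tendsto (ψ i) l (𝓝 k) := fun i => by
    by_cases hi : i ∈ s
    · simpa only [ψ, hi, if_true] using hs i hi
    · simpa only [ψ, hi, if_false] using hsc i hi
  choose k hk hψk using hψ
  have hrest : Tendsto (fun x => ∑ i, c i * Real.log (ψ i x)) l
      (𝓝 (∑ i, c i * Real.log (k i))) :=
    tendsto_finsetSum _ fun i _ =>
      ((Real.continuousAt_log (hk i)).tendsto.comp (hψk i)).const_mul (c i)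
  refine (hlog.atBot_add hrest).congr' ?_
  filter_upwards [hρ, eventually_all.2 fun i => (hψk i).eventually_ne (hk i)] with x hρx hψx
  rw [Finset.sum_mul, ← Finset.univ_inter s, ← Finset.sum_ite_mem, ← Finset.sum_add_distrib]
  refine Finset.sum_congr rfl fun i _ => ?_
  by_cases hi : i ∈ s
  · have hφ : φ i x ≠ 0 := by
      have := hψx i
      simp only [ψ, hi, if_true] at this
      exact left_ne_zero_of_mul (by simpa [div_eq_mul_inv] using this)
    simp only [ψ, hi, if_true, Real.log_div hφ hρx]
    ring
  · simp only [ψ, hi, if_false, zero_add]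

section Compartmental

variable {ι : Type*} [Fintype ι] {E : Matrix ι ι ℝ}

theorem sum_mulVec_add_pos_of_zero_set [DecidableEq ι] {a fs w : ι → ℝ}
    (hoff : ∀ i j, i ≠ j → 0 ≤ E i j) (hdet : E.det ≠ 0) (ha : ∀ i, 0 ≤ a i)
    (hEfs : E *ᵥ fs = -a) (hfs : ∀ i, 0 < fs i)
    (hw : ∀ i, 0 ≤ w i) {s : Finset ι} (hs : ∀ i, i ∈ s ↔ w i = 0) (hne : s.Nonempty) :
    0 < ∑ i ∈ s, (E *ᵥ w + a) i := by
  have hterm : ∀ i ∈ s, ∀ j, 0 ≤ E i j * w j := fun i hi j => by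
    rcases eq_or_ne i j with rfl | hij
    · rw [(hs i).1 hi, mul_zero]
    · exact mul_nonneg (hoff i j hij) (hw j)
  have hrow : ∀ i ∈ s, 0 ≤ (E *ᵥ w) i := fun i hi =>
    Finset.sum_nonneg fun j _ => hterm i hi j
  have hnonneg : ∀ i ∈ s, 0 ≤ (E *ᵥ w + a) i := fun i hi => add_nonneg (hrow i hi) (ha i)
  refine (Finset.sum_nonneg hnonneg).lt_of_ne fun hzero => hdet ?_
  have hzero_at : ∀ i ∈ s, (E *ᵥ w) i = 0 ∧ a i = 0 := fun i hi =>
    (add_eq_zero_iff_of_nonneg (hrow i hi) (ha i)).1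
      ((Finset.sum_eq_zero_iff_of_nonneg hnonneg).1 hzero.symm i hi)
  -- `fs` restricted to `s` is a positive kernel vector of the diagonal block of `E` on `s`
  refine Matrix.det_eq_zero_of_mulVec_eq_zero_on_block (· ∈ s) (fun i hi j hj => ?_)
    (v := fs) (hne.imp fun i hi => ⟨hi, (hfs i).ne'⟩) fun i hi => ?_
  · have hEw : E i j * w j = 0 := (Finset.sum_eq_zero_iff_of_nonneg fun j _ => hterm i hi j).1
      (hzero_at i hi).1 j (Finset.mem_univ j)
    exact (mul_eq_zero.1 hEw).resolve_right fun h => hj ((hs j).2 h)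
  · rw [hEfs, Pi.neg_apply, (hzero_at i hi).2, neg_zero]

theorem sum_mulVec_neg_of_support [DecidableEq ι] {h : ι → ℝ}
    (hoff : ∀ i j, i ≠ j → 0 ≤ E i j) (hcol : ∀ j, ∑ i, E i j ≤ 0) (hdet : E.det ≠ 0)
    (hh : ∀ i, 0 ≤ h i) {s : Finset ι}
    (hs : ∀ i, i ∈ s ↔ 0 < h i) (hne : s.Nonempty) : ∑ i ∈ s, (E *ᵥ h) i < 0 := by
  have hout : ∀ j ∈ s, ∀ i ∈ sᶜ, 0 ≤ E i j := fun j hj i hi =>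
    hoff i j fun hij => Finset.mem_compl.1 hi (hij ▸ hj)
  have hcol_s : ∀ j ∈ s, ∑ i ∈ s, E i j ≤ 0 := fun j hj => by
    have := hcol j
    rw [← Finset.sum_add_sum_compl s] at this
    linarith [Finset.sum_nonneg (hout j hj)]
  have hswap : ∑ i ∈ s, (E *ᵥ h) i = ∑ j, (∑ i ∈ s, E i j) * h j := by
    simp only [Matrix.mulVec, dotProduct, Finset.sum_mul]
    exact Finset.sum_comm
  have hterm : ∀ j, (∑ i ∈ s, E i j) * h j ≤ 0 := fun j => by
    by_cases hj : j ∈ s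
    · exact mul_nonpos_of_nonpos_of_nonneg (hcol_s j hj) (hh j)
    · rw [(not_lt.1 fun h => hj ((hs j).2 h)).antisymm (hh j), mul_zero]
  rw [hswap]
  refine (Finset.sum_nonpos fun j _ => hterm j).lt_of_ne fun hzero => hdet ?_
  have hcol_zero : ∀ j ∈ s, ∑ i ∈ s, E i j = 0 := fun j hj =>
    (mul_eq_zero.1 ((Finset.sum_eq_zero_iff_of_nonpos fun j _ => hterm j).1 hzero j
      (Finset.mem_univ j))).resolve_right ((hs j).1 hj).ne'
  have hout_zero : ∀ j ∈ s, ∑ i ∈ sᶜ, E i j = 0 := fun j hj => by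
    have := hcol j
    rw [← Finset.sum_add_sum_compl s, hcol_zero j hj, zero_add] at this
    exact this.antisymm (Finset.sum_nonneg (hout j hj))
  -- the all-ones vector restricted to `s` is a left kernel vector of the diagonal block on `s`
  rw [← Matrix.det_transpose]
  refine Matrix.det_eq_zero_of_mulVec_eq_zero_on_block (· ∈ s) (fun j hj i hi => ?_)
    (v := fun _ => 1) (hne.imp fun j hj => ⟨hj, one_ne_zero⟩) fun j hj => ?_
  · exact (Finset.sum_eq_zero_iff_of_nonneg (hout j hj)).1 (hout_zero j hj) i
      (Finset.mem_compl.2 hi)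
  · simp only [Matrix.mulVec, dotProduct, Matrix.transpose_apply, mul_one]
    rw [← Finset.sum_add_sum_compl s, hcol_zero j hj, hout_zero j hj, add_zero]

end Compartmental

theorem two_mul_sum_mul_mul_eq {ι R : Type*} [Fintype ι] [CommRing R] (M : Matrix ι ι R)
    (u : ι → R) :
    2 * ∑ i, ∑ j, M i j * u i * u j =
      ∑ i, (∑ j, M i j + ∑ j, M j i) * u i ^ 2 - ∑ i, ∑ j, M i j * (u i - u j) ^ 2 := by
  have hsq : ∀ i j, M i j * (u i - u j) ^ 2 =
      M i j * u i ^ 2 + M i j * u j ^ 2 - 2 * (M i j * u i * u j) := fun i j => by ring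
  simp only [hsq, Finset.sum_sub_distrib, Finset.sum_add_distrib, add_mul, Finset.sum_mul,
    ← Finset.mul_sum]
  rw [Finset.sum_comm (f := fun i j => M j i * u i ^ 2)]
  ring

section Dissipation

variable {ι : Type*} [Fintype ι] {E : Matrix ι ι ℝ} {a g h f u : ι → ℝ} {t : ℝ}

theorem two_mul_sum_sub_eq_neg (hEh : E *ᵥ h = g) (hEf : E *ᵥ f = t • g - a)
    (hu : h = f * u) :
    2 * ∑ i, g i * u i - t * ∑ i, g i * u i ^ 2 =
      -(∑ i, (a i - f i * ∑ k, E k i) * u i ^ 2 + ∑ i, ∑ j, E i j * f j * (u i - u j) ^ 2) := by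
  have hrow : ∀ i, ∑ j, E i j * f j = t * g i - a i := fun i => by
    simpa [Matrix.mulVec, dotProduct] using congrFun hEf i
  have hgu : ∀ i, g i * u i = ∑ j, E i j * f j * u i * u j := fun i => by
    rw [← hEh, hu]
    simp only [Matrix.mulVec, dotProduct, Pi.mul_apply, Finset.sum_mul]
    exact Finset.sum_congr rfl fun j _ => by ring
  have hdiag : ∑ i, (∑ j, E i j * f j + ∑ j, E j i * f i) * u i ^ 2 =
      t * ∑ i, g i * u i ^ 2 - ∑ i, (a i - f i * ∑ k, E k i) * u i ^ 2 := by
    rw [Finset.mul_sum, ← Finset.sum_sub_distrib]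
    refine Finset.sum_congr rfl fun i _ => ?_
    rw [hrow i, ← Finset.sum_mul]
    ring
  have key := two_mul_sum_mul_mul_eq (fun i j => E i j * f j) u
  rw [hdiag] at key
  rw [Finset.sum_congr rfl fun i _ => hgu i]
  linear_combination key

theorem sum_sq_pos_of_ne_zero (hoff : ∀ i j, i ≠ j → 0 ≤ E i j) (hcol : ∀ j, ∑ i, E i j ≤ 0)
    (ha : ∀ i, 0 ≤ a i) (hEh : E *ᵥ h = g) (hEf : E *ᵥ f = t • g - a) (hu : h = f * u)
    (hf : ∀ i, 0 < f i) (htu : ∀ i, t * u i ≠ 1) (hg : g ≠ 0) :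
    0 < ∑ i, (a i - f i * ∑ k, E k i) * u i ^ 2 + ∑ i, ∑ j, E i j * f j * (u i - u j) ^ 2 := by
  have hdiag : ∀ i, 0 ≤ (a i - f i * ∑ k, E k i) * u i ^ 2 := fun i =>
    mul_nonneg (by nlinarith [ha i, hf i, hcol i]) (sq_nonneg _)
  have hoffd : ∀ i j, 0 ≤ E i j * f j * (u i - u j) ^ 2 := fun i j => by
    rcases eq_or_ne i j with rfl | hij
    · simp
    · exact mul_nonneg (mul_nonneg (hoff i j hij) (hf j).le) (sq_nonneg _)
  have hrow : ∀ i, 0 ≤ ∑ j, E i j * f j * (u i - u j) ^ 2 := fun i =>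
    Finset.sum_nonneg fun j _ => hoffd i j
  refine (add_nonneg (Finset.sum_nonneg fun i _ => hdiag i)
    (Finset.sum_nonneg fun i _ => hrow i)).lt_of_ne fun hzero => hg ?_
  obtain ⟨hz₁, hz₂⟩ := (add_eq_zero_iff_of_nonneg (Finset.sum_nonneg fun i _ => hdiag i)
    (Finset.sum_nonneg fun i _ => hrow i)).1 hzero.symm
  have hau : ∀ i, a i * u i = 0 := fun i => by
    rcases mul_eq_zero.1 ((Finset.sum_eq_zero_iff_of_nonneg fun i _ => hdiag i).1 hz₁ i
      (Finset.mem_univ i)) with h | h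
    · have : a i = 0 := by nlinarith [ha i, hf i, hcol i]
      rw [this, zero_mul]
    · rw [pow_eq_zero_iff two_ne_zero |>.1 h, mul_zero]
  have hflat : ∀ i j, E i j * f j * u j = E i j * f j * u i := fun i j => by
    rcases mul_eq_zero.1 ((Finset.sum_eq_zero_iff_of_nonneg fun j _ => hoffd i j).1
      ((Finset.sum_eq_zero_iff_of_nonneg fun i _ => hrow i).1 hz₂ i (Finset.mem_univ i)) j
      (Finset.mem_univ j)) with h | h
    · rw [h, zero_mul, zero_mul]
    · rw [sub_eq_zero.1 (pow_eq_zero_iff two_ne_zero |>.1 h)]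
  -- `u` is constant along every edge of `E`, so row `i` reads `g i = t * u i * g i`
  funext i
  have hgi : g i = (t * g i - a i) * u i := by
    have hrow_eq : ∑ j, E i j * f j = t * g i - a i := by
      simpa [Matrix.mulVec, dotProduct] using congrFun hEf i
    calc g i = ∑ j, E i j * f j * u j := by
          rw [← hEh, hu]
          simp only [Matrix.mulVec, dotProduct, Pi.mul_apply, mul_assoc]
      _ = (∑ j, E i j * f j) * u i := by
          rw [Finset.sum_mul]
          exact Finset.sum_congr rfl fun j _ => hflat i j
      _ = (t * g i - a i) * u i := by rw [hrow_eq]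
  have : g i * (1 - t * u i) = 0 := by linear_combination hgi - hau i
  exact (mul_eq_zero.1 this).resolve_right (sub_ne_zero.2 (htu i).symm)

end Dissipation

section FeasibleSet

variable {ι : Type*} {fs h : ι → ℝ}

def feasibleSet (fs h : ι → ℝ) : Set ℝ := {x | ∀ i, 0 < fs i + x * h i}

theorem isOpen_feasibleSet [Finite ι] : IsOpen (feasibleSet fs h) := by
  simp only [feasibleSet, Set.ofPred_forall]
  exact isOpen_iInter_of_finite fun i => isOpen_lt continuous_const (by fun_prop)

theorem ordConnected_feasibleSet : (feasibleSet fs h).OrdConnected := by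
  simp only [feasibleSet, Set.ofPred_forall]
  refine Set.ordConnected_iInter fun i => ⟨fun x hx y hy z hz => ?_⟩
  simp only [Set.mem_ofPred_eq] at hx hy ⊢
  rcases le_total 0 (h i) with hhi | hhi <;> nlinarith [hz.1, hz.2]

theorem zero_mem_feasibleSet (hfs : ∀ i, 0 < fs i) : 0 ∈ feasibleSet fs h := fun i => by
  simpa using hfs i

theorem closure_feasibleSet_subset :
    closure (feasibleSet fs h) ⊆ {x | ∀ i, 0 ≤ fs i + x * h i} := by
  refine closure_minimal (fun x hx i => (hx i).le) ?_
  simp only [Set.ofPred_forall]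
  exact isClosed_iInter fun i => isClosed_le continuous_const (by fun_prop)

theorem zero_lt_csSup_feasibleSet [Finite ι] (hfs : ∀ i, 0 < fs i)
    (hB : BddAbove (feasibleSet fs h)) : 0 < sSup (feasibleSet fs h) :=
  (le_csSup hB (zero_mem_feasibleSet hfs)).lt_of_ne
    (ne_of_mem_of_not_mem (zero_mem_feasibleSet hfs) (isOpen_feasibleSet.csSup_notMem hB))

theorem feasibleSet_neg : feasibleSet fs (-h) = -feasibleSet fs h := by
  ext x
  simp [feasibleSet]

end FeasibleSet

section FeasibilityFun

variable {ι : Type*} [Fintype ι] {E : Matrix ι ι ℝ} {a fs g h : ι → ℝ}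

noncomputable def feasibilityFun (fs g h : ι → ℝ) (x : ℝ) : ℝ :=
  ∑ i, g i * Real.log (fs i + x * h i)

theorem feasibilityFun_neg (x : ℝ) :
    feasibilityFun fs (-g) (-h) (-x) = -feasibilityFun fs g h x := by
  simp [feasibilityFun, Finset.sum_neg_distrib]

theorem hasDerivAt_feasibilityFun {x : ℝ} (hx : x ∈ feasibleSet fs h) :
    HasDerivAt (feasibilityFun fs g h) (∑ i, g i * (h i / (fs i + x * h i))) x :=
  HasDerivAt.fun_sum fun i _ =>
    (((hasDerivAt_mul_const (h i)).const_add (fs i)).log (hx i).ne').const_mul (g i)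

theorem continuousOn_feasibilityFun :
    ContinuousOn (feasibilityFun fs g h) (feasibleSet fs h) := fun _ hx =>
  (hasDerivAt_feasibilityFun hx).continuousAt.continuousWithinAt

theorem two_mul_sum_div_sub_lt_zero (hoff : ∀ i j, i ≠ j → 0 ≤ E i j)
    (hcol : ∀ j, ∑ i, E i j ≤ 0) (ha : ∀ i, 0 ≤ a i) (hEfs : E *ᵥ fs = -a)
    (hfs : ∀ i, 0 < fs i) (hEh : E *ᵥ h = g) (hg : g ≠ 0) {x : ℝ}
    (hx : x ∈ feasibleSet fs h) :
    2 * ∑ i, g i * (h i / (fs i + x * h i)) - x * ∑ i, g i * (h i / (fs i + x * h i)) ^ 2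
      < 0 := by
  have hf : ∀ i, 0 < (fs + x • h) i := hx
  have hEf : E *ᵥ (fs + x • h) = x • g - a := by
    rw [Matrix.mulVec_add, Matrix.mulVec_smul, hEfs, hEh]
    abel
  have hu : h = (fs + x • h) * (h / (fs + x • h)) :=
    funext fun i => (mul_div_cancel₀ _ (hf i).ne').symm
  have htu : ∀ i, x * (h / (fs + x • h)) i ≠ 1 := fun i hxu => by
    rw [Pi.div_apply, mul_div_assoc', div_eq_one_iff_eq (hf i).ne'] at hxu
    simp only [Pi.add_apply, Pi.smul_apply, smul_eq_mul] at hxu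
    linarith [hfs i]
  have hid := two_mul_sum_sub_eq_neg hEh hEf hu
  have hpos := sum_sq_pos_of_ne_zero hoff hcol ha hEh hEf hu hf htu hg
  simp only [Pi.div_apply, Pi.add_apply, Pi.smul_apply, smul_eq_mul] at hid hpos
  linarith

theorem deriv_feasibilityFun_lt_zero (hoff : ∀ i j, i ≠ j → 0 ≤ E i j)
    (hcol : ∀ j, ∑ i, E i j ≤ 0) (ha : ∀ i, 0 ≤ a i) (hEfs : E *ᵥ fs = -a)
    (hfs : ∀ i, 0 < fs i) (hEh : E *ᵥ h = g) (hg : g ≠ 0) {x : ℝ}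
    (hx : x ∈ feasibleSet fs h) : deriv (feasibilityFun fs g h) x < 0 := by
  set D : ℝ → ℝ := fun t => ∑ i, g i * (h i / (fs i + t * h i))
  set S : ℝ → ℝ := fun t => ∑ i, g i * (h i / (fs i + t * h i)) ^ 2
  have hkey : ∀ t ∈ feasibleSet fs h, 2 * D t - t * S t < 0 := fun t ht =>
    two_mul_sum_div_sub_lt_zero hoff hcol ha hEfs hfs hEh hg ht
  have hD : ∀ t ∈ feasibleSet fs h, HasDerivAt D (-S t) t := fun t ht => by
    refine (HasDerivAt.fun_sum fun i _ => ((hasDerivAt_const t (h i)).div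
      ((hasDerivAt_mul_const (h i)).const_add (fs i)) (ht i).ne').const_mul (g i)).congr_deriv
      ?_
    simp only [S, ← Finset.sum_neg_distrib]
    refine Finset.sum_congr rfl fun i _ => ?_
    field_simp
    ring
  rw [(hasDerivAt_feasibilityFun hx).deriv]
  rcases eq_or_ne x 0 with rfl | hx0
  · linarith [hkey 0 hx]
  -- `(t² D)' = t (2 D - t S)`, which has the sign of `-t`, and `t² D` vanishes at `0`
  have hG := neg_of_hasDerivAt_of_mul_neg ordConnected_feasibleSet (zero_mem_feasibleSet hfs)
    (G := fun t => t ^ 2 * D t) (G' := fun t => t * (2 * D t - t * S t))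
    (fun t ht => ((hasDerivAt_pow 2 t).mul (hD t ht)).congr_deriv (by push_cast; ring))
    (by simp) (fun t ht ht0 => by
      rw [← mul_assoc, ← sq]
      exact mul_neg_of_pos_of_neg (by positivity) (hkey t ht)) hx hx0
  exact neg_of_mul_neg_right hG (sq_nonneg x)

theorem strictAntiOn_feasibilityFun (hoff : ∀ i j, i ≠ j → 0 ≤ E i j)
    (hcol : ∀ j, ∑ i, E i j ≤ 0) (ha : ∀ i, 0 ≤ a i) (hEfs : E *ᵥ fs = -a)
    (hfs : ∀ i, 0 < fs i) (hEh : E *ᵥ h = g) (hg : g ≠ 0) :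
    StrictAntiOn (feasibilityFun fs g h) (feasibleSet fs h) :=
  strictAntiOn_of_deriv_neg ordConnected_feasibleSet.convex continuousOn_feasibilityFun
    fun _ hx => deriv_feasibilityFun_lt_zero hoff hcol ha hEfs hfs hEh hg
      (interior_subset hx)

theorem tendsto_feasibilityFun_nhdsLT [DecidableEq ι] (hoff : ∀ i j, i ≠ j → 0 ≤ E i j)
    (hdet : E.det ≠ 0) (ha : ∀ i, 0 ≤ a i) (hEfs : E *ᵥ fs = -a) (hfs : ∀ i, 0 < fs i)
    (hEh : E *ᵥ h = g) {b : ℝ} (hb : 0 < b) (hfb : ∀ i, 0 ≤ fs i + b * h i)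
    (hzero : ∃ i, fs i + b * h i = 0) :
    Tendsto (feasibilityFun fs g h) (𝓝[<] b) atBot := by
  set V := Finset.univ.filter fun i => fs i + b * h i = 0
  have hV : ∀ i, i ∈ V ↔ fs i + b * h i = 0 := by simp [V]
  have hgV : 0 < ∑ i ∈ V, g i := by
    have hpos := sum_mulVec_add_pos_of_zero_set hoff hdet ha hEfs hfs (w := fs + b • h) hfb hV
      (hzero.imp fun i hi => (hV i).2 hi)
    have hbg : E *ᵥ (fs + b • h) + a = b • g := by
      rw [Matrix.mulVec_add, Matrix.mulVec_smul, hEfs, hEh]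
      abel
    rw [hbg] at hpos
    simp only [Pi.smul_apply, smul_eq_mul, ← Finset.mul_sum] at hpos
    exact pos_of_mul_pos_right hpos hb.le
  -- near `b`, the coordinates in `V` vanish linearly and the others stay positive
  refine tendsto_sum_mul_log_atBot V (ρ := fun x => b - x)
    (eventually_nhdsWithin_of_forall fun x hx => (sub_pos.2 hx).ne') (fun i hi => ?_)
    (fun i hi => ?_) ?_
  · have hhi : h i ≠ 0 := fun h0 => (hfs i).ne' (by simpa [h0] using (hV i).1 hi)
    refine ⟨-h i, neg_ne_zero.2 hhi, tendsto_const_nhds.congr' ?_⟩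
    filter_upwards [self_mem_nhdsWithin] with x hx
    rw [eq_div_iff (sub_pos.2 hx).ne']
    linear_combination -(hV i).1 hi
  · refine ⟨fs i + b * h i, fun h0 => hi ((hV i).2 h0), ?_⟩
    exact ((continuous_const.add (continuous_id.mul continuous_const)).tendsto b).mono_left
      nhdsWithin_le_nhds
  · have hsub : Tendsto (fun x => b - x) (𝓝[<] b) (𝓝[>] 0) :=
      tendsto_nhdsWithin_iff.2
        ⟨((continuous_sub_left b).tendsto' b 0 (sub_self b)).mono_left nhdsWithin_le_nhds,
          eventually_nhdsWithin_of_forall fun _ hx => Set.mem_Ioi.2 (sub_pos.2 hx)⟩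
    exact (Real.tendsto_log_nhdsGT_zero.comp hsub).const_mul_atBot hgV

theorem tendsto_feasibilityFun_atTop [DecidableEq ι] (hoff : ∀ i j, i ≠ j → 0 ≤ E i j)
    (hcol : ∀ j, ∑ i, E i j ≤ 0) (hdet : E.det ≠ 0) (hfs : ∀ i, 0 < fs i)
    (hEh : E *ᵥ h = g) (hh : ∀ i, 0 ≤ h i) (hh0 : h ≠ 0) :
    Tendsto (feasibilityFun fs g h) atTop atBot := by
  set P := Finset.univ.filter fun i => 0 < h i
  have hP : ∀ i, i ∈ P ↔ 0 < h i := by simp [P]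
  have hPne : P.Nonempty := by
    obtain ⟨i, hi⟩ := Function.ne_iff.1 hh0
    exact ⟨i, (hP i).2 ((hh i).lt_of_ne' hi)⟩
  have hgP : ∑ i ∈ P, g i < 0 := hEh ▸ sum_mulVec_neg_of_support hoff hcol hdet hh hP hPne
  -- at infinity, the coordinates in `P` grow linearly and the others are constant
  refine tendsto_sum_mul_log_atBot P (ρ := fun x => x) (eventually_ne_atTop 0)
    (fun i hi => ?_) (fun i hi => ?_) ?_
  · refine ⟨h i, ((hP i).1 hi).ne', ?_⟩
    have hlim := (tendsto_inv_atTop_zero.const_mul (fs i)).add_const (h i)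
    rw [mul_zero, zero_add] at hlim
    refine hlim.congr' ?_
    filter_upwards [eventually_ne_atTop 0] with x hx
    field_simp
  · have hhi : h i = 0 := (not_lt.1 fun h => hi ((hP i).2 h)).antisymm (hh i)
    exact ⟨fs i, (hfs i).ne', by simp [hhi]⟩
  · exact Real.tendsto_log_atTop.const_mul_atTop_of_neg hgP

theorem tendsto_feasibilityFun_nhdsLT_csSup [DecidableEq ι]
    (hoff : ∀ i j, i ≠ j → 0 ≤ E i j) (hdet : E.det ≠ 0) (ha : ∀ i, 0 ≤ a i)
    (hEfs : E *ᵥ fs = -a) (hfs : ∀ i, 0 < fs i) (hEh : E *ᵥ h = g)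
    (hB : BddAbove (feasibleSet fs h)) :
    Tendsto (feasibilityFun fs g h) (𝓝[<] sSup (feasibleSet fs h)) atBot := by
  have hnonneg := closure_feasibleSet_subset
    (csSup_mem_closure ⟨0, zero_mem_feasibleSet hfs⟩ hB)
  obtain ⟨i, hi⟩ := not_forall.1 (isOpen_feasibleSet.csSup_notMem hB)
  exact tendsto_feasibilityFun_nhdsLT hoff hdet ha hEfs hfs hEh
    (zero_lt_csSup_feasibleSet hfs hB) hnonneg ⟨i, (not_lt.1 hi).antisymm (hnonneg i)⟩

theorem tendsto_feasibilityFun_atTop_of_not_bddAbove [DecidableEq ι]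
    (hoff : ∀ i j, i ≠ j → 0 ≤ E i j) (hcol : ∀ j, ∑ i, E i j ≤ 0) (hdet : E.det ≠ 0)
    (hfs : ∀ i, 0 < fs i) (hEh : E *ᵥ h = g) (hh0 : h ≠ 0)
    (hB : ¬BddAbove (feasibleSet fs h)) :
    Tendsto (feasibilityFun fs g h) atTop atBot := by
  refine tendsto_feasibilityFun_atTop hoff hcol hdet hfs hEh (fun i => ?_) hh0
  by_contra! hhi
  exact hB ⟨fs i / -h i, fun x hx => by
    rw [le_div_iff₀ (neg_pos.2 hhi)]
    linarith [hx i]⟩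

theorem tendsto_feasibilityFun_nhdsGT_csInf [DecidableEq ι]
    (hoff : ∀ i j, i ≠ j → 0 ≤ E i j) (hdet : E.det ≠ 0) (ha : ∀ i, 0 ≤ a i)
    (hEfs : E *ᵥ fs = -a) (hfs : ∀ i, 0 < fs i) (hEh : E *ᵥ h = g)
    (hB : BddBelow (feasibleSet fs h)) :
    Tendsto (feasibilityFun fs g h) (𝓝[>] sInf (feasibleSet fs h)) atTop := by
  have hlim := tendsto_feasibilityFun_nhdsLT_csSup hoff hdet ha hEfs hfs
    (by rw [Matrix.mulVec_neg, hEh]) (by rwa [feasibleSet_neg, bddAbove_neg])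
  rw [feasibleSet_neg, ← neg_neg (sSup _), ← Real.sInf_def] at hlim
  simpa [Function.comp_def, feasibilityFun_neg] using hlim.comp tendsto_neg_nhdsGT

theorem tendsto_feasibilityFun_atBot_of_not_bddBelow [DecidableEq ι]
    (hoff : ∀ i j, i ≠ j → 0 ≤ E i j) (hcol : ∀ j, ∑ i, E i j ≤ 0) (hdet : E.det ≠ 0)
    (hfs : ∀ i, 0 < fs i) (hEh : E *ᵥ h = g) (hh0 : h ≠ 0)
    (hB : ¬BddBelow (feasibleSet fs h)) :
    Tendsto (feasibilityFun fs g h) atBot atTop := by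
  have hlim := tendsto_feasibilityFun_atTop_of_not_bddAbove hoff hcol hdet hfs
    (by rw [Matrix.mulVec_neg, hEh]) (neg_ne_zero.2 hh0) (by rwa [feasibleSet_neg, bddAbove_neg])
  simpa [Function.comp_def, feasibilityFun_neg] using hlim.comp tendsto_neg_atBot_atTop

theorem exists_feasibilityFun_neg [DecidableEq ι] (hoff : ∀ i j, i ≠ j → 0 ≤ E i j)
    (hcol : ∀ j, ∑ i, E i j ≤ 0) (hdet : E.det ≠ 0) (ha : ∀ i, 0 ≤ a i)
    (hEfs : E *ᵥ fs = -a) (hfs : ∀ i, 0 < fs i) (hEh : E *ᵥ h = g) (hh0 : h ≠ 0) :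
    ∃ x ∈ feasibleSet fs h, feasibilityFun fs g h x < 0 := by
  have h0 := zero_mem_feasibleSet (h := h) hfs
  by_cases hB : BddAbove (feasibleSet fs h)
  · have hmem := ordConnected_feasibleSet.mem_nhdsLT_csSup h0 (zero_lt_csSup_feasibleSet hfs hB)
    obtain ⟨x, hx, hxX⟩ := (((tendsto_feasibilityFun_nhdsLT_csSup hoff hdet ha hEfs hfs hEh
      hB).eventually_lt_atBot 0).and hmem).exists
    exact ⟨x, hxX, hx⟩
  · obtain ⟨x, hx, hxX⟩ := (((tendsto_feasibilityFun_atTop_of_not_bddAbove hoff hcol hdet hfs hEh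
      hh0 hB).eventually_lt_atBot 0).and (ordConnected_feasibleSet.mem_atTop h0 hB)).exists
    exact ⟨x, hxX, hx⟩

theorem exists_feasibilityFun_pos [DecidableEq ι] (hoff : ∀ i j, i ≠ j → 0 ≤ E i j)
    (hcol : ∀ j, ∑ i, E i j ≤ 0) (hdet : E.det ≠ 0) (ha : ∀ i, 0 ≤ a i)
    (hEfs : E *ᵥ fs = -a) (hfs : ∀ i, 0 < fs i) (hEh : E *ᵥ h = g) (hh0 : h ≠ 0) :
    ∃ x ∈ feasibleSet fs h, 0 < feasibilityFun fs g h x := by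
  obtain ⟨x, hx, hFx⟩ := exists_feasibilityFun_neg hoff hcol hdet ha hEfs hfs
    (by rw [Matrix.mulVec_neg, hEh]) (neg_ne_zero.2 hh0)
  rw [feasibleSet_neg] at hx
  rw [← neg_neg x, feasibilityFun_neg] at hFx
  exact ⟨-x, hx, neg_neg_iff_pos.1 hFx⟩

end FeasibilityFun

theorem feasibility_function_monotone_general {N : ℕ}
    (E : Matrix (Fin N) (Fin N) ℝ) (a g fs h : Fin N → ℝ)
    (hoff : ∀ i j, i ≠ j → 0 ≤ E i j)
    (hcol : ∀ j, ∑ i, E i j ≤ 0)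
    (hdet : E.det ≠ 0)
    (ha : ∀ i, 0 ≤ a i)
    (hfs : fs = -(E⁻¹.mulVec a)) (hfspos : ∀ i, 0 < fs i)
    (hh : h = E⁻¹.mulVec g) (hhne : h ≠ 0)
    (X : Set ℝ) (hX : X = {x : ℝ | ∀ i, 0 < fs i + x * h i})
    (F : ℝ → ℝ) (hF : ∀ x, F x = ∑ i, g i * Real.log (fs i + x * h i)) :
    StrictAntiOn F X ∧
    (BddBelow X → Tendsto F (𝓝[>] (sInf X)) atTop) ∧
    (¬ BddBelow X → Tendsto F atBot atTop) ∧
    (BddAbove X → Tendsto F (𝓝[<] (sSup X)) atBot) ∧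
    (¬ BddAbove X → Tendsto F atTop atBot) ∧
    (∃! x : ℝ, x ∈ X ∧ F x = 0) := by
  have hEfs : E *ᵥ fs = -a := by
    rw [hfs, Matrix.mulVec_neg, Matrix.mulVec_mulVec, Matrix.mul_nonsing_inv _ hdet.isUnit,
      Matrix.one_mulVec]
  have hEh : E *ᵥ h = g := by
    rw [hh, Matrix.mulVec_mulVec, Matrix.mul_nonsing_inv _ hdet.isUnit, Matrix.one_mulVec]
  have hg : g ≠ 0 := by
    rintro rfl
    exact hhne (by rw [hh, Matrix.mulVec_zero])
  obtain rfl : X = feasibleSet fs h := hX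
  obtain rfl : F = feasibilityFun fs g h := funext hF
  have hanti := strictAntiOn_feasibilityFun hoff hcol ha hEfs hfspos hEh hg
  exact ⟨hanti, tendsto_feasibilityFun_nhdsGT_csInf hoff hdet ha hEfs hfspos hEh,
    tendsto_feasibilityFun_atBot_of_not_bddBelow hoff hcol hdet hfspos hEh hhne,
    tendsto_feasibilityFun_nhdsLT_csSup hoff hdet ha hEfs hfspos hEh,
    tendsto_feasibilityFun_atTop_of_not_bddAbove hoff hcol hdet hfspos hEh hhne,
    existsUnique_eq_zero_of_injOn ordConnected_feasibleSet.isPreconnected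
      continuousOn_feasibilityFun hanti.injOn
      (exists_feasibilityFun_pos hoff hcol hdet ha hEfs hfspos hEh hhne)
      (exists_feasibilityFun_neg hoff hcol hdet ha hEfs hfspos hEh hhne)⟩

/-- Monotonicity of the feasibility function `F(x) = gᵀ ln(f* + x h)` on the
maximal positivity interval `X`, with `F → +∞` at the left endpoint (or at `-∞`
when the interval is unbounded below), `F → -∞` at the right endpoint (or at
`+∞`), and existence of a unique zero of `F` in `X`. -/
theorem feasibility_function_monotone {N : ℕ}
    (E : Matrix (Fin N) (Fin N) ℝ) (a g fs h : Fin N → ℝ)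
    (hoff : ∀ i j, i ≠ j → 0 ≤ E i j)
    (hdiag : ∀ i, E i i < 0)
    (hcol : ∀ j, ∑ i, E i j ≤ 0)
    (hdet : E.det ≠ 0)
    (ha : ∀ i, 0 ≤ a i)
    (hfs : fs = -(E⁻¹.mulVec a)) (hfspos : ∀ i, 0 < fs i)
    (hh : h = E⁻¹.mulVec g) (hhne : h ≠ 0)
    (X : Set ℝ) (hX : X = {x : ℝ | ∀ i, 0 < fs i + x * h i})
    (F : ℝ → ℝ) (hF : ∀ x, F x = ∑ i, g i * Real.log (fs i + x * h i)) :
    StrictAntiOn F X ∧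
    (BddBelow X → Tendsto F (𝓝[>] (sInf X)) atTop) ∧
    (¬ BddBelow X → Tendsto F atBot atTop) ∧
    (BddAbove X → Tendsto F (𝓝[<] (sSup X)) atBot) ∧
    (¬ BddAbove X → Tendsto F atTop atBot) ∧
    (∃! x : ℝ, x ∈ X ∧ F x = 0) :=
  feasibility_function_monotone_general E a g fs h hoff hcol hdet ha hfs hfspos hh hhne X hX F hF
end

section
/- Let M ∈ ℝ^{N×N} be a Kirchhoff matrix (nonnegative off-diagonal entries, zero column sums) partitioned as M = [[-1ᵀa, bᵀ],[a, E]] where a, b ∈ ℝ^{N-1}_{≥0} and E ∈ ℝ^{(N-1)×(N-1)}. Then bᵀ = -1ᵀE, and if E is invertible with E⁻¹ ≤ 0 entrywise and every coordinate of the graph is reachable from the support of a, then f* = -E⁻¹a is strictly positive componentwise. -/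
/-- For a Kirchhoff matrix `M = [[-1ᵀa, bᵀ],[a, E]]` (nonnegative off-diagonal
entries, zero column sums) one has `bᵀ = -1ᵀE`; and if `E` is invertible with
`E⁻¹ ≤ 0` entrywise, where an entry `(E⁻¹)_{ij}` is strictly negative whenever
node `i` is reachable from node `j`, and every node is reachable from the
support of `a`, then `f* = -E⁻¹ a` is strictly positive componentwise. -/
theorem kirchhoff_reference_positivity {n : ℕ}
    (M : Matrix (Fin (n + 1)) (Fin (n + 1)) ℝ)
    (hoff : ∀ i j, i ≠ j → 0 ≤ M i j)
    (hcolsum : ∀ j, ∑ i, M i j = 0)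
    (a b : Fin n → ℝ) (E : Matrix (Fin n) (Fin n) ℝ)
    (h00 : M 0 0 = -∑ i, a i)
    (ha : ∀ i, a i = M i.succ 0)
    (hb : ∀ j, b j = M 0 j.succ)
    (hE : ∀ i j, E i j = M i.succ j.succ)
    (hdet : E.det ≠ 0)
    (hinvle : ∀ i j, E⁻¹ i j ≤ 0)
    (hreachneg : ∀ i j : Fin n,
      Relation.ReflTransGen (fun u v => 0 < E v u) j i → E⁻¹ i j < 0)
    (hreach : ∀ i : Fin n, ∃ j : Fin n,
      0 < a j ∧ Relation.ReflTransGen (fun u v => 0 < E v u) j i) :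
    (∀ j, b j = -∑ i, E i j) ∧ (∀ i, 0 < (-(E⁻¹.mulVec a)) i) := by
  have hanneg : ∀ j, 0 ≤ a j := fun j => by
    rw [ha]; exact hoff _ _ (Fin.succ_ne_zero j)
  constructor
  · intro j
    have h := hcolsum j.succ
    rw [Fin.sum_univ_succ] at h
    rw [hb]
    have : ∑ i, E i j = ∑ i : Fin n, M i.succ j.succ := by
      exact Finset.sum_congr rfl fun i _ => hE i j
    linarith
  · intro i
    obtain ⟨j₀, hj₀pos, hj₀reach⟩ := hreach i
    have hneg : E⁻¹ i j₀ < 0 := hreachneg i j₀ hj₀reach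
    have hsum : ∑ j, E⁻¹ i j * a j < 0 := by
      have := Finset.sum_lt_sum (f := fun j => E⁻¹ i j * a j) (g := fun _ => (0 : ℝ))
        (s := Finset.univ)
        (fun j _ => mul_nonpos_of_nonpos_of_nonneg (hinvle i j) (hanneg j))
        ⟨j₀, Finset.mem_univ _, mul_neg_of_neg_of_pos hneg hj₀pos⟩
      simpa using this
    simp only [Pi.neg_apply, Matrix.mulVec, dotProduct]
    linarith
end
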